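/- For any signature Σ, any Σ-term T, and any internal node i of T, the parent i' of i in T is the unique positive integer such that i' ≤ cnc(T)(i) < i' + 1, where cnc(T)(i) = pa(T)(i) + 1 - 2^(lp(T)(i) - arity of the decoration of pa(T)(i)). -/

import Mathlib

structure Signature where
  carrier : Type
  arity : carrier → ℕ

namespace EW

variable {σ : Signature}

/-- Σ-terms: planar rooted trees with nodes decorated by the signature. -/
inductive PreTerm (σ : Signature) where
  | leaf : PreTerm σ
  | node : σ.carrier → List (PreTerm σ) → PreTerm σ

/-- Well-formedness: each internal node decorated by `s` has `arity s` children. -/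
def WF : PreTerm σ → Prop
  | .leaf => True
  | .node s l => l.length = σ.arity s ∧ ∀ t ∈ l, WF t

def isLeaf : PreTerm σ → Bool
  | .leaf => true
  | .node _ _ => false

/-- Subterm at an address (list of 0-based child positions). -/
def subAt : PreTerm σ → List ℕ → Option (PreTerm σ)
  | t, [] => some t
  | .leaf, _ :: _ => none
  | .node _ l, j :: p =>
      match l[j]? with
      | some t => subAt t p
      | none => none
  termination_by t p => p.length

/-- Replace the subterm at an address. -/
def replaceAt : PreTerm σ → List ℕ → PreTerm σ → PreTerm σ
  | _, [], R => R
  | .leaf, _ :: _, _ => .leaf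
  | .node s l, j :: p, R => .node s (l.set j (replaceAt (l.getD j .leaf) p R))
  termination_by t p _ => p.length

/-- Addresses of all positions (internal nodes and leaves) in preorder. -/
def addrs : PreTerm σ → List (List ℕ)
  | .leaf => [[]]
  | .node _ l =>
      [] :: ((l.attach.map (fun t => addrs t.1)).zipIdx.map
        (fun jp => jp.1.map (jp.2 :: ·))).flatten
  decreasing_by
    have := List.sizeOf_lt_of_mem t.2
    simp only [PreTerm.node.sizeOf_spec]
    omega

def isNodeAt (T : PreTerm σ) (p : List ℕ) : Bool :=
  match subAt T p with
  | some (.node _ _) => true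
  | _ => false

/-- Addresses of internal nodes, in preorder. -/
def nodeAddrs (T : PreTerm σ) : List (List ℕ) := (addrs T).filter (isNodeAt T)

/-- Degree: number of internal nodes. -/
def deg (T : PreTerm σ) : ℕ := (nodeAddrs T).length

/-- Address of the `i`-th internal node (1-indexed, preorder). -/
def nodeAddr (T : PreTerm σ) (i : ℕ) : Option (List ℕ) := (nodeAddrs T)[i-1]?

/-- Preorder index (1-based) of the internal node at address `p`. -/
def nodeIdx (T : PreTerm σ) (p : List ℕ) : ℕ := (nodeAddrs T).idxOf p + 1

/-- Parent of internal node `i` (the root is its own parent). -/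
def paOf (T : PreTerm σ) (i : ℕ) : ℕ :=
  match nodeAddr T i with
  | some [] => 1
  | some p => nodeIdx T p.dropLast
  | none => 0

/-- Local position of internal node `i` among its parent's children
(1-based; the root has local position 0). -/
def lpOf (T : PreTerm σ) (i : ℕ) : ℕ :=
  match nodeAddr T i with
  | some [] => 0
  | some p => p.getLast?.getD 0 + 1
  | none => 0

def decAt (T : PreTerm σ) (p : List ℕ) : Option σ.carrier :=
  match subAt T p with
  | some (.node s _) => some s
  | _ => none

/-- The decoration word: decorations of internal nodes in preorder. -/
def dcWord (T : PreTerm σ) : List σ.carrier := (nodeAddrs T).filterMap (decAt T)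

def arityOfNode (T : PreTerm σ) (i : ℕ) : ℕ :=
  match nodeAddr T i with
  | some p =>
      match decAt T p with
      | some s => σ.arity s
      | none => 0
  | none => 0

/-- The connection word entry:
`cnc T i = pa T i + 1 - 2 ^ (lp T i - arity (decoration of pa T i))`. -/
def cnc (T : PreTerm σ) (i : ℕ) : ℚ :=
  (paOf T i : ℚ) + 1 - (2 : ℚ) ^ ((lpOf T i : ℤ) - (arityOfNode T (paOf T i) : ℤ))

def cncWord (T : PreTerm σ) : List ℚ := (List.range (deg T)).map (fun k => cnc T (k+1))

/-- The Σ-easterly wind order. -/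
def ewLE (T₁ T₂ : PreTerm σ) : Prop :=
  dcWord T₁ = dcWord T₂ ∧ ∀ i, 1 ≤ i → i ≤ deg T₁ → cnc T₁ i ≤ cnc T₂ i

/-- The easterly wind rewrite rule `T₁ ⇀_i T₂` : the internal node `i` of `T₁`
is visited immediately after a leaf in preorder, and `T₂` is obtained by moving
the subterm rooted at `i` onto that leaf. -/
def Rewrite (i : ℕ) (T₁ T₂ : PreTerm σ) : Prop :=
  ∃ p q k S,
    nodeAddr T₁ i = some p ∧
    (addrs T₁)[k]? = some q ∧ (addrs T₁)[k+1]? = some p ∧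
    subAt T₁ q = some .leaf ∧
    subAt T₁ p = some S ∧
    T₂ = replaceAt (replaceAt T₁ p .leaf) q S

def RewriteAny (T₁ T₂ : PreTerm σ) : Prop := ∃ i, 1 ≤ i ∧ Rewrite i T₁ T₂

/-- `(i₁, j₁, i)` is dominated by `(i₂, j₂, i)` iff `(i₁, -j₁) ≤lex (i₂, -j₂)`:
here on the pairs of (parent, local position). -/
def Dominated (e₁ e₂ : ℕ × ℕ) : Prop := e₁.1 < e₂.1 ∨ (e₁.1 = e₂.1 ∧ e₂.2 ≤ e₁.2)

/-- `i''` is a (strict) descendant of `i'`. -/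
def Desc (T : PreTerm σ) (i' i'' : ℕ) : Prop :=
  ∃ p q, nodeAddr T i' = some p ∧ nodeAddr T i'' = some q ∧ p <+: q ∧ p ≠ q

end EW
namespace EW

variable {σ : Signature}

def sortNodesFirst (l : List (PreTerm σ)) : List (PreTerm σ) :=
  l.filter (fun t => !isLeaf t) ++ l.filter (fun t => isLeaf t)

def sortLeavesFirst (l : List (PreTerm σ)) : List (PreTerm σ) :=
  l.filter (fun t => isLeaf t) ++ l.filter (fun t => !isLeaf t)

mutual
/-- Tilting map: at every internal node whose preorder index (the second
argument is the index of the current root) belongs to `X`, rearrange the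
children so that the non-leaf children, keeping their relative order, come
before the leaf children. -/
def tltT (X : ℕ → Prop) [DecidablePred X] : PreTerm σ → ℕ → PreTerm σ
  | .leaf, _ => .leaf
  | .node s l, n =>
      .node s (if X n then sortNodesFirst (tltL X l (n+1)) else tltL X l (n+1))
def tltL (X : ℕ → Prop) [DecidablePred X] : List (PreTerm σ) → ℕ → List (PreTerm σ)
  | [], _ => []
  | t :: ts, n => tltT X t n :: tltL X ts (n + deg t)
end

mutual
/-- Reversed tilting map: leaf children first. -/
def tltRT (X : ℕ → Prop) [DecidablePred X] : PreTerm σ → ℕ → PreTerm σ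
  | .leaf, _ => .leaf
  | .node s l, n =>
      .node s (if X n then sortLeavesFirst (tltRL X l (n+1)) else tltRL X l (n+1))
def tltRL (X : ℕ → Prop) [DecidablePred X] : List (PreTerm σ) → ℕ → List (PreTerm σ)
  | [], _ => []
  | t :: ts, n => tltRT X t n :: tltRL X ts (n + deg t)
end

/-- The X-tilting map. -/
def tlt (X : ℕ → Prop) [DecidablePred X] (T : PreTerm σ) : PreTerm σ := tltT X T 1

/-- The X-reversed tilting map. -/
def tltR (X : ℕ → Prop) [DecidablePred X] (T : PreTerm σ) : PreTerm σ := tltRT X T 1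

/-- Fully tilted: tilted w.r.t. the set of all positive integers. -/
def FullyTilted (T : PreTerm σ) : Prop := tlt (fun n => 1 ≤ n) T = T

/-- {1}-tilted. -/
def tltOne (T : PreTerm σ) : PreTerm σ := tlt (fun n => n = 1) T

/-- Number of internal-node siblings of the node `i` lying weakly to its left
(including `i` itself). -/
def lb (T : PreTerm σ) (i : ℕ) : ℕ :=
  match nodeAddr T i with
  | some [] => 0
  | some p =>
      match subAt T p.dropLast with
      | some (.node _ l) =>
          ((l.take (p.getLast?.getD 0 + 1)).filter (fun t => !isLeaf t)).length
      | _ => 0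
  | none => 0

/-- Scope: number of (strict) internal-node descendants of the node `i`. -/
def sc (T : PreTerm σ) (i : ℕ) : ℕ :=
  match nodeAddr T i with
  | some p =>
      match subAt T p with
      | some S => deg S - 1
      | none => 0
  | none => 0

end EW
namespace EW

variable {σ : Signature}

/-- The signature Σ_ℕ := Σ ⊔ ℕ, where `n : ℕ` has arity `n`. -/
def sigN (σ : Signature) : Signature := ⟨σ.carrier ⊕ ℕ, Sum.elim σ.arity id⟩

/-- All decorations come from Σ (no ℕ-decoration). -/
def OnlyBase : PreTerm (sigN σ) → Prop
  | .leaf => True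
  | .node (Sum.inl _) l => ∀ t ∈ l, OnlyBase t
  | .node (Sum.inr _) _ => False
  decreasing_by
    rename_i h
    have := List.sizeOf_lt_of_mem h
    have h2 : ∀ (x : (sigN σ).carrier) (l : List (PreTerm (sigN σ))),
        sizeOf l < sizeOf (PreTerm.node x l) := fun x l => by
      simp only [PreTerm.node.sizeOf_spec]
      omega
    exact Nat.lt_trans this (h2 _ _)

/-- The corolla on `s`: a single internal node with `arity s` leaves. -/
def corolla (s : σ.carrier) : PreTerm σ := .node s (List.replicate (σ.arity s) .leaf)

/-- Number of leaves (arity) of a term. -/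
def arT (T : PreTerm σ) : ℕ := ((addrs T).filter (fun p => !isNodeAt T p)).length

mutual
/-- Replace the leftmost leaf of the first term by the second term. -/
def graftLeft : PreTerm σ → PreTerm σ → PreTerm σ
  | .leaf, R => R
  | .node s l, R => .node s (graftLeftL l R)
def graftLeftL : List (PreTerm σ) → PreTerm σ → List (PreTerm σ)
  | [], _ => []
  | t :: ts, R => if arT t = 0 then t :: graftLeftL ts R else graftLeft t R :: ts
end

/-- `f↑(w)`: the forest of corollas `|w| · C(w 1) ⋯ C(w n)`. -/
def fUp (w : List σ.carrier) : PreTerm (sigN σ) :=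
  .node (Sum.inr w.length) (w.map (fun s => corolla (σ := sigN σ) (Sum.inl s)))

/-- `f↓(w)`: iteratively graft the corollas of the letters of `w` onto the
leftmost leaf, starting from the corolla of `|w|`. -/
def fDown (w : List σ.carrier) : PreTerm (sigN σ) :=
  w.foldl (fun F s => graftLeft F (corolla (σ := sigN σ) (Sum.inl s)))
    (corolla (σ := sigN σ) (Sum.inr w.length))

/-- Σ-forest: a Σ_ℕ-term `n · T₁ ⋯ T_n` with the `Tᵢ`'s Σ-terms. -/
def IsForest (F : PreTerm (sigN σ)) : Prop :=
  WF F ∧ ∃ n l, F = .node (Sum.inr n) l ∧ ∀ t ∈ l, OnlyBase t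

/-- Size of a balanced forest: its degree minus one. -/
def fsize (F : PreTerm (sigN σ)) : ℕ := deg F - 1

/-- Balanced Σ-forest: `deg F = n + 1` where `n` decorates the root. -/
def IsBalanced (F : PreTerm (sigN σ)) : Prop :=
  IsForest F ∧ ∃ n l, F = .node (Sum.inr n) l ∧ deg F = n + 1

/-- Leaning Σ-forest: balanced and {1}-tilted. -/
def IsLeaning (F : PreTerm (sigN σ)) : Prop := IsBalanced F ∧ tltOne F = F

/-- Concatenation of forests. -/
def fconc : PreTerm (sigN σ) → PreTerm (sigN σ) → PreTerm (sigN σ)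
  | .node (Sum.inr n) l, .node (Sum.inr n') l' => .node (Sum.inr (n + n')) (l ++ l')
  | F, _ => F

/-- The over operation on leaning forests. -/
def overOp (F₁ F₂ : PreTerm (sigN σ)) : PreTerm (sigN σ) := tltOne (fconc F₁ F₂)

/-- Number of extreme leaves: leaves visited after every internal node. -/
def extremeCount (T : PreTerm σ) : ℕ :=
  (((addrs T).map (fun p => !isNodeAt T p)).reverse.takeWhile id).length

mutual
/-- Graft the terms of the second argument (listed from the rightmost extreme
leaf to the leftmost) onto the extreme leaves of the first argument, from the
right. Returns the new term, the unused grafts and whether everything seen so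
far is still in the extreme zone. -/
def gET : PreTerm σ → List (PreTerm σ) → PreTerm σ × List (PreTerm σ) × Bool
  | .leaf, ts =>
      match ts with
      | [] => (.leaf, [], true)
      | g :: gs => (g, gs, true)
  | .node s l, ts =>
      let r := gEL l ts
      (.node s r.1, r.2.1, false)
def gEL : List (PreTerm σ) → List (PreTerm σ) → List (PreTerm σ) × List (PreTerm σ) × Bool
  | [], ts => ([], ts, true)
  | t :: us, ts =>
      let r := gEL us ts
      if r.2.2 then
        let a := gET t r.2.1
        (a.1 :: r.1, a.2.1, a.2.2)
      else (t :: r.1, r.2.1, false)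
end

def childrenOf : PreTerm (sigN σ) → List (PreTerm (sigN σ))
  | .node _ l => l
  | .leaf => []

/-- The under operation on leaning forests: graft the root subterms of
`F₂ ⌢ C(r)` onto the extreme leaves of `F₁ ⌢ C(n₂)`. -/
def under (F₁ F₂ : PreTerm (sigN σ)) : PreTerm (sigN σ) :=
  (gET (fconc F₁ (corolla (σ := sigN σ) (Sum.inr (fsize F₂))))
    (List.replicate (extremeCount F₁) PreTerm.leaf ++ (childrenOf F₂).reverse)).1

mutual
/-- Restriction machinery: keep only the internal nodes whose preorder index
satisfies `K`; kept nodes whose parent is removed float to the root. Returns,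
for a subterm, the in-place result (a leaf if the root of the subterm is
removed) together with the list of floated subtrees. -/
def restT (K : ℕ → Bool) : PreTerm (sigN σ) → ℕ → PreTerm (sigN σ) × List (PreTerm (sigN σ))
  | .leaf, _ => (.leaf, [])
  | .node s l, n =>
      let r := restL K l (n+1)
      if K n then (.node s (r.map Prod.fst), (r.map Prod.snd).flatten)
      else (.leaf, (r.map (fun a => (if isLeaf a.1 then [] else [a.1]) ++ a.2)).flatten)
def restL (K : ℕ → Bool) :
    List (PreTerm (sigN σ)) → ℕ → List (PreTerm (sigN σ) × List (PreTerm (sigN σ)))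
  | [], _ => []
  | t :: ts, n => restT K t n :: restL K ts (n + deg t)
end

def sumDeg (l : List (PreTerm σ)) : ℕ := (l.map deg).sum

/-- Restriction of a leaning forest to a set `I` of indices: keep the root and
the internal nodes `{i + 1 : i ∈ I}`, together with their adjacent edges;
the root gets decoration `#I` and is padded by leaves on the right. -/
def restrict (F : PreTerm (sigN σ)) (I : Finset ℕ) : PreTerm (sigN σ) :=
  match F with
  | .node (Sum.inr _) l =>
      let r := restL (fun i => decide (i - 1 ∈ I ∧ 2 ≤ i)) l 2
      let cs := (r.map (fun a => (if isLeaf a.1 then [] else [a.1]) ++ a.2)).flatten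
      .node (Sum.inr I.card) (cs ++ List.replicate (I.card - sumDeg cs) .leaf)
  | F => F

/-- k-top restriction. -/
def topRes (k : ℕ) (F : PreTerm (sigN σ)) : PreTerm (sigN σ) := restrict F (Finset.Icc 1 k)

/-- k-bottom restriction. -/
def botRes (k : ℕ) (F : PreTerm (sigN σ)) : PreTerm (sigN σ) :=
  restrict F (Finset.Icc (k+1) (fsize F))

end EW
namespace EW

/-- The signature ℕ where `arity n = n`. -/
def natSig : Signature := ⟨ℕ, id⟩

/-- `f↑` for words on the signature ℕ. -/
def fUpN (w : List ℕ) : PreTerm natSig :=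
  .node w.length (w.map (corolla (σ := natSig)))

/-- `f↓` for words on the signature ℕ. -/
def fDownN (w : List ℕ) : PreTerm natSig :=
  w.foldl (fun F s => graftLeft F (corolla (σ := natSig) s))
    (corolla (σ := natSig) w.length)

/-- The word `dw n = (n-1, n-2, …, 0)`. -/
def dwWord (n : ℕ) : List ℕ := (List.range n).reverse

/-- The minimum `dt n := n · C(n-1) ⋯ C(0)` of the rooted tree easterly wind
poset of order `n`. -/
def dt (n : ℕ) : PreTerm natSig := fUpN (dwWord n)

/-- Rooted trees. -/
inductive RTree where
  | node : List RTree → RTree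

mutual
/-- Size (number of nodes) of a rooted tree. -/
def rsize : RTree → ℕ
  | .node l => 1 + rsizeL l
def rsizeL : List RTree → ℕ
  | [] => 0
  | t :: ts => rsize t + rsizeL ts
end

mutual
/-- Scope sequence of a rooted tree: number of descendants of each node, in
preorder. -/
def scL : RTree → List ℕ
  | .node l => rsizeL l :: scLL l
def scLL : List RTree → List ℕ
  | [] => []
  | t :: ts => scL t ++ scLL ts
end

/-- The Tamari order on rooted trees (Knuth's realization): componentwise
comparison of scope sequences. -/
def tamLE (R₁ R₂ : RTree) : Prop :=
  rsize R₁ = rsize R₂ ∧ ∀ i, (scL R₁).getD i 0 ≤ (scL R₂).getD i 0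

mutual
/-- Underlying rooted tree of a term: delete the leaves and forget the
decorations. -/
def rt {σ : Signature} : PreTerm σ → RTree
  | .leaf => .node []
  | .node _ l => .node (rtL l)
def rtL {σ : Signature} : List (PreTerm σ) → List RTree
  | [] => []
  | .leaf :: ts => rtL ts
  | .node _ l :: ts => .node (rtL l) :: rtL ts
end

end EW


namespace EW

variable {σ : Signature}

theorem indexOf_getElem?_self {α : Type _} [BEq α] [LawfulBEq α] {a : α} {l : List α}
    (h : a ∈ l) : l.idxOf a < l.length ∧ l[l.idxOf a]? = some a := by
  have hlt : l.idxOf a < l.length :=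
    List.idxOf_lt_length_of_mem h
  refine ⟨hlt, ?_⟩
  rw [List.getElem?_eq_getElem hlt]
  have hp := List.findIdx_getElem (p := (· == a)) (xs := l) (w := hlt)
  simpa using hp

theorem subAt_append (T : PreTerm σ) (q r : List ℕ) :
    subAt T (q ++ r) = (subAt T q).bind (fun t => subAt t r) := by
  induction q generalizing T with
  | nil => simp [subAt]
  | cons j p ih =>
    cases T with
    | leaf => simp [subAt]
    | node s l =>
      simp only [List.cons_append, subAt]
      cases h : l[j]? with
      | none => simp
      | some t => simp [ih]

theorem wf_subAt {T : PreTerm σ} (hT : WF T) {p : List ℕ} {S : PreTerm σ}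
    (h : subAt T p = some S) : WF S := by
  induction p generalizing T with
  | nil => simp [subAt] at h; subst h; exact hT
  | cons j p ih =>
    cases T with
    | leaf => simp [subAt] at h
    | node s l =>
      simp only [subAt] at h
      cases hj : l[j]? with
      | none => rw [hj] at h; simp at h
      | some t =>
        rw [hj] at h
        simp only [WF] at hT
        obtain ⟨hlt', heq'⟩ := List.getElem?_eq_some_iff.mp hj
        exact ih (hT.2 t (heq' ▸ List.getElem_mem hlt')) h

theorem mem_addrs_of_subAt {T : PreTerm σ} {q : List ℕ} (h : (subAt T q).isSome) :
    q ∈ addrs T := by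
  induction q generalizing T with
  | nil => cases T <;> simp [addrs]
  | cons j p ih =>
    cases T with
    | leaf => simp [subAt] at h
    | node s l =>
      simp only [subAt] at h
      cases hj : l[j]? with
      | none => rw [hj] at h; simp at h
      | some t =>
        rw [hj] at h
        have hm : p ∈ addrs t := ih h
        simp only [addrs, List.mem_cons]
        right
        rw [List.mem_flatten]
        refine ⟨(addrs t).map (j :: ·), ?_, List.mem_map_of_mem hm⟩
        rw [List.mem_map]
        refine ⟨(addrs t, j), ?_, rfl⟩
        rw [List.mem_zipIdx_iff_getElem?]
        have hmap : l.attach.map (fun t => addrs t.1) = l.map addrs := by simp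
        rw [hmap, List.getElem?_map, hj]
        rfl

theorem cnc_close (P : ℕ) (e : ℤ) (he : e ≤ 0) :
    (P : ℚ) ≤ (P : ℚ) + 1 - 2 ^ e ∧ (P : ℚ) + 1 - 2 ^ e < (P : ℚ) + 1 := by
  have h1 : (0:ℚ) < 2 ^ e := by positivity
  have h2 : (2:ℚ) ^ e ≤ 1 := zpow_le_one_of_nonpos₀ (by norm_num) he
  constructor <;> linarith

end EW

/-- the parent of an internal node `i` of a Σ-term `T` is the
unique positive integer `i'` with `i' ≤ cnc T i < i' + 1`. -/
theorem stmt0 (σ : Signature) (T : EW.PreTerm σ) (hT : EW.WF T)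
    (i : ℕ) (hi1 : 1 ≤ i) (hi2 : i ≤ EW.deg T) :
    1 ≤ EW.paOf T i ∧
    ((EW.paOf T i : ℚ) ≤ EW.cnc T i ∧ EW.cnc T i < EW.paOf T i + 1) ∧
    ∀ i' : ℕ, 1 ≤ i' → (i' : ℚ) ≤ EW.cnc T i → EW.cnc T i < i' + 1 →
      i' = EW.paOf T i := by
  open EW in
  have hlen : i - 1 < (nodeAddrs T).length := by
    unfold deg at hi2; omega
  have hp : nodeAddr T i = some ((nodeAddrs T)[i-1]) := List.getElem?_eq_getElem hlen
  set p := (nodeAddrs T)[i-1] with hpdef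
  have hpmem : p ∈ nodeAddrs T := List.getElem_mem hlen
  have hnode : isNodeAt T p = true := (List.mem_filter.mp hpmem).2
  obtain ⟨s', l', hsub⟩ : ∃ s' l', subAt T p = some (.node s' l') := by
    unfold isNodeAt at hnode
    cases h : subAt T p with
    | none => rw [h] at hnode; simp at hnode
    | some t =>
      cases t with
      | leaf => rw [h] at hnode; simp at hnode
      | node s' l' => exact ⟨s', l', rfl⟩
  have key : 1 ≤ paOf T i ∧ ∃ e : ℤ, e ≤ 0 ∧
      cnc T i = (paOf T i : ℚ) + 1 - 2 ^ e := by
    rcases hq : p with _ | ⟨a, p'⟩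
    · -- root case
      rw [hq] at hsub
      have hTn : T = .node s' l' := by simpa [subAt] using hsub
      have hpa : paOf T i = 1 := by rw [paOf, hp, hq]
      have hlp : lpOf T i = 0 := by rw [lpOf, hp, hq]
      refine ⟨by omega, (0 : ℤ) - arityOfNode T (paOf T i), by omega, ?_⟩
      rw [cnc, hpa, hlp]
      norm_num
    · -- non-root case
      rw [hq] at hsub hp
      have hne : (a :: p') ≠ ([] : List ℕ) := by simp
      set q' := (a :: p').dropLast with hq'def
      set j := (a :: p').getLast hne with hjdef
      have hsplit : a :: p' = q' ++ [j] := (List.dropLast_append_getLast hne).symm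
      rw [hsplit, subAt_append] at hsub
      obtain ⟨t0, hsubq, hsubj⟩ : ∃ t0, subAt T q' = some t0 ∧
          subAt t0 [j] = some (.node s' l') := by
        cases h : subAt T q' with
        | none => rw [h] at hsub; simp at hsub
        | some t0 => rw [h] at hsub; exact ⟨t0, rfl, hsub⟩
      obtain ⟨s, l, ht0⟩ : ∃ s l, t0 = PreTerm.node s l := by
        cases t0 with
        | leaf => simp [subAt] at hsubj
        | node s l => exact ⟨s, l, rfl⟩
      subst ht0
      have hjl : l[j]? = some (.node s' l') := by
        simp only [subAt] at hsubj
        cases hjq : l[j]? with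
        | none => rw [hjq] at hsubj; simp at hsubj
        | some u => rw [hjq] at hsubj; simp [subAt] at hsubj; rw [hsubj]
      have hjlt : j < l.length := by
        have := List.getElem?_eq_some_iff.mp hjl
        exact this.1
      have hqmem : q' ∈ addrs T := mem_addrs_of_subAt (by rw [hsubq]; rfl)
      have hqnode : isNodeAt T q' = true := by simp [isNodeAt, hsubq]
      have hqin : q' ∈ nodeAddrs T := List.mem_filter.mpr ⟨hqmem, hqnode⟩
      obtain ⟨hk, hgk⟩ := indexOf_getElem?_self hqin
      have hpa : paOf T i = (nodeAddrs T).idxOf q' + 1 := by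
        rw [paOf, hp]
        simp only [nodeIdx, ← hq'def]
      have hna : nodeAddr T ((nodeAddrs T).idxOf q' + 1) = some q' := by
        rw [nodeAddr]
        simpa using hgk
      have hdec : decAt T q' = some s := by simp [decAt, hsubq]
      have har : arityOfNode T (paOf T i) = σ.arity s := by
        rw [hpa, arityOfNode, hna]
        simp [hdec]
      have hwf : WF (PreTerm.node s l) := wf_subAt hT hsubq
      simp only [WF] at hwf
      have hlen2 : l.length = σ.arity s := hwf.1
      have hlp : lpOf T i = j + 1 := by
        rw [lpOf, hp]
        simp only [List.getLast?_eq_getLast hne, ← hjdef, Option.getD_some]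
      refine ⟨by omega, (lpOf T i : ℤ) - arityOfNode T (paOf T i), ?_, ?_⟩
      · rw [hlp, har]; omega
      · rw [cnc]
  obtain ⟨hpa1, e, he, hcnc⟩ := key
  have hmid := EW.cnc_close (EW.paOf T i) e he
  rw [← hcnc] at hmid
  refine ⟨hpa1, hmid, fun i' hi'1 h1 h2 => ?_⟩
  have ha : (i' : ℚ) < (EW.paOf T i : ℚ) + 1 := lt_of_le_of_lt h1 hmid.2
  have hb : (EW.paOf T i : ℚ) < (i' : ℚ) + 1 := lt_of_le_of_lt hmid.1 h2
  have ha' : i' < EW.paOf T i + 1 := by exact_mod_cast (by push_cast at ha ⊢; linarith : (i' : ℚ) < ((EW.paOf T i + 1 : ℕ) : ℚ))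
  have hb' : EW.paOf T i < i' + 1 := by exact_mod_cast (by push_cast at hb ⊢; linarith : ((EW.paOf T i : ℕ) : ℚ) < ((i' + 1 : ℕ) : ℚ))
  omega
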